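/- arXiv:1804.07703 — 2 statements merged into one kernel-verified Lean document; each statement's English description precedes it below -/
import Mathlib

section
/- Let A x ≤ b be a constraint system with A ∈ ℚ^{m×n} that has at least one rational solution, and let h ∈ ℚ^n \ {0}. Then h is a bounded direction in A x ≤ b if and only if every x ∈ ℚ^n with A x ≤ 0^m satisfies h^T x = 0. -/
open Matrix

/-- Direction `h ≠ 0` is bounded in the constraint system `A x ≤ b`: there exist
`l, u ∈ ℚ` such that `A x ≤ b` implies `hᵀ x ≤ u` and `−hᵀ x ≤ −l`. -/
def Bounded {ι : Type} [Fintype ι] {n : ℕ} (A : Matrix ι (Fin n) ℚ) (b : ι → ℚ)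
    (h : Fin n → ℚ) : Prop :=
  ∃ l u : ℚ, (∀ x : Fin n → ℚ, A.mulVec x ≤ b → h ⬝ᵥ x ≤ u) ∧
    (∀ x : Fin n → ℚ, A.mulVec x ≤ b → (-h) ⬝ᵥ x ≤ -l)

/-!
A linear functional is bounded above on a nonempty polyhedron `{x | A x ≤ b}` exactly when it is
nonpositive on the recession cone `{d | A d ≤ 0}`. One direction follows along the rays
`x₀ + t d`; the other is Farkas' lemma, which writes the functional as a nonnegative combination
`yᵀ A` of the rows, bounded above by `yᵀ b`. Farkas' lemma goes by induction on the number of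
rows: if the direction `x` found for all rows but `a` has `a ⬝ x > 0`, project the other rows and
the functional along `a` onto the hyperplane `{v | v ⬝ x = 0}` and use the induction hypothesis
once more. Applying the equivalence to `h` and `-h` gives the theorem.
-/

namespace Matrix

variable {K σ : Type*} [Field K] [LinearOrder K] [IsStrictOrderedRing K] [Fintype σ]

def projAlong [DecidableEq σ] (a x : σ → K) : Matrix σ σ K := 1 - (a ⬝ᵥ x)⁻¹ • vecMulVec a x

theorem projAlong_mulVec [DecidableEq σ] (a x v : σ → K) :
    projAlong a x *ᵥ v = v - (v ⬝ᵥ x / a ⬝ᵥ x) • a := by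
  ext i
  simp [projAlong, sub_mulVec, smul_mulVec, vecMulVec_mulVec, dotProduct_comm x]
  ring

theorem projAlong_mulVec_self [DecidableEq σ] {a x : σ → K} (hax : a ⬝ᵥ x ≠ 0) :
    projAlong a x *ᵥ a = 0 := by
  rw [projAlong_mulVec, div_self hax, one_smul, sub_self]

theorem exists_nonneg_vecMul_eq_or_exists_mulVec_nonpos {m : ℕ} (A : Matrix (Fin m) σ K)
    (g : σ → K) : (∃ y, 0 ≤ y ∧ y ᵥ* A = g) ∨ ∃ x, A *ᵥ x ≤ 0 ∧ 0 < g ⬝ᵥ x := by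
  classical
  induction m generalizing g with
  | zero =>
    by_cases hg : g = 0
    · exact .inl ⟨0, le_rfl, by simp [hg]⟩
    · exact .inr ⟨g, by simp, (Finset.sum_nonneg fun i _ ↦ mul_self_nonneg (g i)).lt_of_ne'
        (dotProduct_self_eq_zero.not.mpr hg)⟩
  | succ m ih =>
    obtain ⟨a, B, rfl⟩ : ∃ a B, A = of (vecCons a B) :=
      ⟨A 0, vecTail A, by ext i j; refine Fin.cases ?_ (fun _ ↦ ?_) i <;> rfl⟩
    rcases ih (of B) g with ⟨y, hy, rfl⟩ | ⟨x, hBx, hgx⟩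
    · exact .inl ⟨vecCons 0 y, Fin.le_cons.mpr ⟨le_rfl, hy⟩, by simp⟩
    rcases le_or_gt (a ⬝ᵥ x) 0 with hax | hax
    · exact .inr ⟨x, by rw [cons_mulVec]; exact Fin.cons_le.mpr ⟨hax, hBx⟩, hgx⟩
    set P := projAlong a x
    rcases ih (of B * Pᵀ) (P *ᵥ g) with ⟨y, hy, hyP⟩ | ⟨z, hBz, hgz⟩
    · set c := y ᵥ* of B
      have hPc : P *ᵥ c = P *ᵥ g := by rwa [← vecMul_vecMul, vecMul_transpose] at hyP
      have hcx : c ⬝ᵥ x ≤ 0 := by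
        rw [← dotProduct_mulVec]
        exact (dotProduct_le_dotProduct_of_nonneg_left hBx hy).trans_eq (dotProduct_zero y)
      have ht : 0 ≤ (g ⬝ᵥ x - c ⬝ᵥ x) / a ⬝ᵥ x := div_nonneg (by linarith) hax.le
      -- `P c = P g` says that `g - c` is the multiple `((g - c) ⬝ᵥ x / a ⬝ᵥ x) • a` of `a`.
      refine .inl ⟨vecCons _ y, Fin.le_cons.mpr ⟨ht, hy⟩, ?_⟩
      rw [cons_vecMul_cons]
      rw [projAlong_mulVec, projAlong_mulVec] at hPc
      linear_combination (norm := module) hPc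
    · have hP : ∀ v, v ⬝ᵥ (Pᵀ *ᵥ z) = (P *ᵥ v) ⬝ᵥ z := fun v ↦ by
        rw [dotProduct_mulVec, vecMul_transpose]
      refine .inr ⟨Pᵀ *ᵥ z, ?_, by rwa [hP]⟩
      rw [cons_mulVec, hP, projAlong_mulVec_self hax.ne', zero_dotProduct, mulVec_mulVec]
      exact Fin.cons_le.mpr ⟨le_rfl, hBz⟩

theorem dotProduct_nonpos_of_forall_dotProduct_le {ι : Type*} [Fintype ι] {A : Matrix ι σ K}
    {b : ι → K} {x₀ : σ → K} (hx₀ : A *ᵥ x₀ ≤ b) {g : σ → K} {u : K}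
    (hu : ∀ x, A *ᵥ x ≤ b → g ⬝ᵥ x ≤ u) {d : σ → K} (hd : A *ᵥ d ≤ 0) : g ⬝ᵥ d ≤ 0 := by
  by_contra! hgd
  have hray : ∀ t : K, 0 ≤ t → A *ᵥ (x₀ + t • d) ≤ b := fun t ht ↦ by
    rw [mulVec_add, mulVec_smul]
    exact add_le_of_le_of_nonpos hx₀ (smul_nonpos_of_nonneg_of_nonpos ht hd)
  have hx₀u := hu x₀ hx₀
  have ht : 0 ≤ (u - g ⬝ᵥ x₀ + 1) / g ⬝ᵥ d := div_nonneg (by linarith) hgd.le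
  have hfar := hu _ (hray _ ht)
  rw [dotProduct_add, dotProduct_smul, smul_eq_mul, div_mul_cancel₀ _ hgd.ne'] at hfar
  linarith

theorem exists_forall_dotProduct_le_of_forall_dotProduct_nonpos {m : ℕ} {A : Matrix (Fin m) σ K}
    (b : Fin m → K) {g : σ → K} (hg : ∀ d, A *ᵥ d ≤ 0 → g ⬝ᵥ d ≤ 0) :
    ∃ u, ∀ x, A *ᵥ x ≤ b → g ⬝ᵥ x ≤ u := by
  obtain ⟨y, hy, rfl⟩ | ⟨d, hd, hgd⟩ := exists_nonneg_vecMul_eq_or_exists_mulVec_nonpos A g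
  · refine ⟨y ⬝ᵥ b, fun x hx ↦ ?_⟩
    rw [← dotProduct_mulVec]
    exact dotProduct_le_dotProduct_of_nonneg_left hx hy
  · exact absurd (hg d hd) hgd.not_ge

theorem exists_forall_dotProduct_le_iff {m : ℕ} {A : Matrix (Fin m) σ K} {b : Fin m → K}
    (hfeas : ∃ x₀, A *ᵥ x₀ ≤ b) (g : σ → K) :
    (∃ u, ∀ x, A *ᵥ x ≤ b → g ⬝ᵥ x ≤ u) ↔ ∀ d, A *ᵥ d ≤ 0 → g ⬝ᵥ d ≤ 0 := by
  obtain ⟨x₀, hx₀⟩ := hfeas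
  exact ⟨fun ⟨_, hu⟩ _ hd ↦ dotProduct_nonpos_of_forall_dotProduct_le hx₀ hu hd,
    exists_forall_dotProduct_le_of_forall_dotProduct_nonpos b⟩

end Matrix

theorem bounded_iff {ι : Type} [Fintype ι] {n : ℕ} {A : Matrix ι (Fin n) ℚ} {b : ι → ℚ}
    {h : Fin n → ℚ} :
    Bounded A b h ↔
      (∃ u, ∀ x, A *ᵥ x ≤ b → h ⬝ᵥ x ≤ u) ∧ ∃ u, ∀ x, A *ᵥ x ≤ b → (-h) ⬝ᵥ x ≤ u :=
  ⟨fun ⟨l, u, hu, hl⟩ ↦ ⟨⟨u, hu⟩, ⟨-l, hl⟩⟩,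
    fun ⟨⟨u, hu⟩, ⟨v, hv⟩⟩ ↦ ⟨-v, u, hu, by simpa only [neg_neg] using hv⟩⟩

theorem bounds_and_equalities_general {m n : ℕ} (A : Matrix (Fin m) (Fin n) ℚ)
    (b : Fin m → ℚ) (hfeas : ∃ x : Fin n → ℚ, A.mulVec x ≤ b)
    (h : Fin n → ℚ) :
    Bounded A b h ↔ ∀ x : Fin n → ℚ, A.mulVec x ≤ 0 → h ⬝ᵥ x = 0 := by
  rw [bounded_iff, exists_forall_dotProduct_le_iff hfeas, exists_forall_dotProduct_le_iff hfeas]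
  simp only [neg_dotProduct, neg_nonpos]
  exact ⟨fun ⟨hle, hge⟩ x hx ↦ le_antisymm (hle x hx) (hge x hx),
    fun hzero ↦ ⟨fun x hx ↦ (hzero x hx).le, fun x hx ↦ (hzero x hx).ge⟩⟩

/-- Bounds and Equalities: if `A x ≤ b` has a rational solution and `h ≠ 0`, then
`h` is bounded in `A x ≤ b` iff every `x` with `A x ≤ 0` satisfies `hᵀ x = 0`. -/
theorem bounds_and_equalities {m n : ℕ} (A : Matrix (Fin m) (Fin n) ℚ)
    (b : Fin m → ℚ) (hfeas : ∃ x : Fin n → ℚ, A.mulVec x ≤ b)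
    (h : Fin n → ℚ) (hh : h ≠ 0) :
    Bounded A b h ↔ ∀ x : Fin n → ℚ, A.mulVec x ≤ 0 → h ⬝ᵥ x = 0 :=
  bounds_and_equalities_general A b hfeas h
end

section
/- Let (A x ≤ b) ∪ (l ≤ D x ≤ u) be a split system with A ∈ ℚ^{m₁×n}, D ∈ ℚ^{m₂×n}, and n = n₁ + n₂. Then the full system (A x ≤ b) ∪ (D x ≤ u) has a mixed solution if and only if the bounded part D x ≤ u alone has a mixed solution. -/
open Matrix

/-- `(A x ≤ b) ∪ (l ≤ D x ≤ u)` is a split system: all rows are nonzero,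
the part `D x ≤ u` is double-bounded, all nonzero directions are unbounded in
`A x ≤ b`, and every row of `A` is unbounded in the combined system. -/
def SplitSystem {m₁ m₂ n : ℕ} (A : Matrix (Fin m₁) (Fin n) ℚ) (b : Fin m₁ → ℚ)
    (D : Matrix (Fin m₂) (Fin n) ℚ) (u : Fin m₂ → ℚ) : Prop :=
  (∀ i : Fin m₁, A i ≠ 0) ∧ (∀ i : Fin m₂, D i ≠ 0) ∧
  (∃ l : Fin m₂ → ℚ, ∀ x : Fin n → ℚ, D.mulVec x ≤ u → ∀ i : Fin m₂, l i ≤ D.mulVec x i) ∧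
  (∀ h : Fin n → ℚ, h ≠ 0 → ¬ Bounded A b h) ∧
  (∀ i : Fin m₁, ¬ Bounded (Matrix.fromRows A D) (Sum.elim b u) (A i))

/-!
Every row `aᵢ` of `A` is bounded above on the combined polyhedron `P` by `bᵢ`, so being unbounded
it is unbounded below, and by Farkas' lemma (over any ordered field a consequence of
Fourier–Motzkin elimination) `P` has a recession direction `yᵢ` with `aᵢ yᵢ < 0`. Since `D` is
bounded below on `{D x ≤ u}`, which contains the given mixed solution `s`, every such direction
satisfies `D yᵢ = 0`. The sum `y` of the `yᵢ` is a recession direction strictly decreasing every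
row of `A`; clearing denominators makes it integral, and then `s + t y` is a mixed solution of the
whole system for every large enough `t ∈ ℕ`.
-/

open Finset Filter

lemma mulVec_finCons_apply {R ι : Type*} [Semiring R] [Fintype ι] {n : ℕ}
    (A : Matrix ι (Fin (n + 1)) R) (x₀ : R) (x : Fin n → R) (i : ι) :
    (A *ᵥ Fin.cons x₀ x) i = A i 0 * x₀ + (A.submatrix id Fin.succ *ᵥ x) i := by
  simp [mulVec, dotProduct, Fin.sum_univ_succ]

variable {K : Type*} [Field K] [LinearOrder K]

section FourierMotzkin

variable {ι : Type*} [DecidableEq ι]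

/-- `fourierMotzkin α * A` is the system obtained from `A` by Fourier–Motzkin elimination of the
variable whose column of coefficients is `α`. -/
def fourierMotzkin (α : ι → K) : Matrix (ι ⊕ ι × ι) ι K :=
  Matrix.of fun
    | .inl i => if α i = 0 then Pi.single i 1 else 0
    | .inr (p, q) => if 0 < α p ∧ α q < 0 then α p • Pi.single q 1 - α q • Pi.single p 1 else 0

variable [Fintype ι]

@[simp]
lemma fourierMotzkin_mulVec_inl (α v : ι → K) (i : ι) :
    (fourierMotzkin α *ᵥ v) (.inl i) = if α i = 0 then v i else 0 := by
  by_cases h : α i = 0 <;> simp [fourierMotzkin, mulVec, h]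

@[simp]
lemma fourierMotzkin_mulVec_inr (α v : ι → K) (p q : ι) :
    (fourierMotzkin α *ᵥ v) (.inr (p, q)) =
      if 0 < α p ∧ α q < 0 then α p * v q - α q * v p else 0 := by
  by_cases h : 0 < α p ∧ α q < 0
  · simp only [fourierMotzkin, mulVec, of_apply, if_pos h, sub_dotProduct, smul_dotProduct,
      single_one_dotProduct, smul_eq_mul]
  · simp [fourierMotzkin, mulVec, h]

lemma fourierMotzkin_mulVec_self (α : ι → K) : fourierMotzkin α *ᵥ α = 0 := by
  ext (i | ⟨p, q⟩)
  · simp +contextual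
  · simp [mul_comm]

end FourierMotzkin

variable [IsStrictOrderedRing K]

lemma fourierMotzkin_nonneg {ι : Type*} [DecidableEq ι] (α : ι → K) (r : ι ⊕ ι × ι) (i : ι) :
    0 ≤ fourierMotzkin α r i := by
  have single_nonneg (j : ι) : 0 ≤ (Pi.single j 1 : ι → K) i := by
    rw [Pi.single_apply]
    split_ifs <;> simp
  rcases r with j | ⟨p, q⟩
  · by_cases h : α j = 0 <;> simp [fourierMotzkin, h, single_nonneg]
  · by_cases h : 0 < α p ∧ α q < 0
    · simp only [fourierMotzkin, of_apply, if_pos h, Pi.sub_apply, Pi.smul_apply, smul_eq_mul]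
      nlinarith [single_nonneg p, single_nonneg q, h.1, h.2]
    · simp [fourierMotzkin, h]

theorem exists_forall_mul_le {ι : Type*} [Fintype ι] {α β : ι → K}
    (h₀ : ∀ i, α i = 0 → 0 ≤ β i)
    (h₁ : ∀ p q, 0 < α p → α q < 0 → α q * β p ≤ α p * β q) :
    ∃ x, ∀ i, α i * x ≤ β i := by
  by_cases hneg : ∃ q, α q < 0
  · obtain ⟨q, hq, hmax⟩ := exists_max_image (univ.filter (α · < 0)) (fun i => β i / α i)
      (by simpa [Finset.Nonempty] using hneg)
    simp only [mem_filter, mem_univ, true_and] at hq hmax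
    refine ⟨β q / α q, fun i => ?_⟩
    rcases lt_trichotomy (α i) 0 with hi | hi | hi
    · rw [← div_le_iff_of_neg' hi]
      exact hmax i hi
    · simpa [hi] using h₀ i hi
    · rw [← le_div_iff₀' hi, div_le_iff_of_neg hq, div_mul_eq_mul_div, div_le_iff₀ hi]
      linarith [h₁ i q hi hq]
  · simp only [not_exists, not_lt] at hneg
    obtain ⟨x, hx⟩ := Finite.exists_ge fun i => β i / α i
    refine ⟨x, fun i => ?_⟩
    rcases (hneg i).eq_or_lt with hi | hi
    · simpa [← hi] using h₀ i hi.symm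
    · exact (le_div_iff₀' hi).1 (hx i)

lemma exists_forall_mul_le_of_fourierMotzkin {ι : Type*} [Fintype ι] [DecidableEq ι]
    {α β : ι → K} (h : 0 ≤ fourierMotzkin α *ᵥ β) : ∃ x, ∀ i, α i * x ≤ β i := by
  refine exists_forall_mul_le (fun i hi => ?_) (fun p q hp hq => ?_)
  · simpa [hi] using h (.inl i)
  · simpa [hp, hq] using h (.inr (p, q))

theorem farkas {ι : Type*} [Fintype ι] {n : ℕ} (A : Matrix ι (Fin n) K) (c : ι → K) :
    (∃ x, A *ᵥ x ≤ c) ∨ ∃ y, 0 ≤ y ∧ y ᵥ* A = 0 ∧ y ⬝ᵥ c < 0 := by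
  classical
  induction n generalizing ι with
  | zero =>
    by_cases hc : 0 ≤ c
    · exact .inl ⟨0, by simpa using hc⟩
    · obtain ⟨i, hi⟩ : ∃ i, c i < 0 := by simpa [Pi.le_def] using hc
      exact .inr ⟨Pi.single i 1, Pi.single_nonneg.2 zero_le_one, Subsingleton.elim _ _,
        by simpa using hi⟩
  | succ n ih =>
    set α : ι → K := fun i => A i 0
    set A' := A.submatrix id Fin.succ
    set W := fourierMotzkin α
    rcases ih (W * A') (W *ᵥ c) with ⟨x', hx'⟩ | ⟨y', hy'0, hy'A, hy'c⟩
    · obtain ⟨x₀, hx₀⟩ := exists_forall_mul_le_of_fourierMotzkin (α := α) (β := c - A' *ᵥ x') <| by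
        rwa [mulVec_sub, sub_nonneg, mulVec_mulVec]
      refine .inl ⟨Fin.cons x₀ x', fun i => ?_⟩
      rw [mulVec_finCons_apply]
      linarith [hx₀ i, Pi.sub_apply c (A' *ᵥ x') i]
    · refine .inr ⟨y' ᵥ* W,
        fun i => sum_nonneg fun r _ => mul_nonneg (hy'0 r) (fourierMotzkin_nonneg α r i), ?_, ?_⟩
      · ext j
        refine Fin.cases ?_ (fun k => ?_) j
        · change (y' ᵥ* W) ⬝ᵥ α = 0
          rw [← dotProduct_mulVec, fourierMotzkin_mulVec_self, dotProduct_zero]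
        · change (y' ᵥ* W ᵥ* A') k = 0
          rw [vecMul_vecMul, hy'A, Pi.zero_apply]
      · rwa [← dotProduct_mulVec]

theorem exists_mulVec_nonpos_dotProduct_neg_of_not_bddBelow {ι : Type*} [Fintype ι] {n : ℕ}
    {M : Matrix ι (Fin n) K} {d : ι → K} {h : Fin n → K}
    (hh : ¬ BddBelow ((h ⬝ᵥ ·) '' {x | M *ᵥ x ≤ d})) : ∃ y, M *ᵥ y ≤ 0 ∧ h ⬝ᵥ y < 0 := by
  rcases farkas (fromRows M (replicateRow Unit h)) (Sum.elim 0 fun _ => -1) with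
    ⟨y, hy⟩ | ⟨z, hz0, hzM, hzc⟩
  · refine ⟨y, fun i => by simpa using hy (.inl i), ?_⟩
    have := hy (.inr ())
    simp only [fromRows_mulVec, replicateRow_mulVec_eq_const, Sum.elim_inr] at this
    linarith [show h ⬝ᵥ y ≤ -1 from this]
  · set σ := z (.inr ())
    have hσ : 0 < σ := by simpa [dotProduct, σ] using hzc
    have hvec : z ∘ Sum.inl ᵥ* M = -(σ • h) := by
      refine eq_neg_of_add_eq_zero_left (Eq.trans ?_ hzM)
      rw [vecMul_fromRows]
      congr 1
      ext j
      simp [vecMul, dotProduct, σ]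
    refine absurd ⟨-((z ∘ Sum.inl) ⬝ᵥ d) / σ, ?_⟩ hh
    rintro _ ⟨x, hx, rfl⟩
    have := dotProduct_le_dotProduct_of_nonneg_left (w := z ∘ Sum.inl) hx fun i => hz0 (.inl i)
    rw [dotProduct_mulVec, hvec, neg_dotProduct, smul_dotProduct, smul_eq_mul] at this
    rw [div_le_iff₀' hσ]
    linarith

lemma mulVec_eq_zero_of_mulVec_nonpos_of_bddBelow {κ : Type*} [Fintype κ] {n : ℕ}
    {D : Matrix κ (Fin n) K} {u l : κ → K} (hl : ∀ x, D *ᵥ x ≤ u → ∀ q, l q ≤ (D *ᵥ x) q)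
    {s : Fin n → K} (hs : D *ᵥ s ≤ u) {y : Fin n → K} (hy : D *ᵥ y ≤ 0) : D *ᵥ y = 0 := by
  ext q
  refine le_antisymm (hy q) (not_lt.1 fun (hq : (D *ᵥ y) q < 0) => ?_)
  -- the step `t` along `y` that takes row `q` from `s` down to `l q - 1`
  set t := ((D *ᵥ s) q - l q + 1) / -(D *ᵥ y) q with ht_def
  have ht : 0 ≤ t := div_nonneg (by linarith [hl s hs q]) (by linarith)
  have hty : t * (D *ᵥ y) q = -((D *ᵥ s) q - l q + 1) := by
    rw [ht_def, div_neg, neg_mul, div_mul_cancel₀ _ hq.ne]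
  have hfeas : D *ᵥ (s + t • y) ≤ u := by
    rw [mulVec_add, mulVec_smul]
    exact fun k => add_le_of_le_of_nonpos (hs k) (mul_nonpos_of_nonneg_of_nonpos ht (hy k))
  have := hl _ hfeas q
  rw [mulVec_add, mulVec_smul, Pi.add_apply, Pi.smul_apply, smul_eq_mul, hty] at this
  linarith

theorem exists_recession_forall_mulVec_neg {ι κ : Type*} [Fintype ι] [Fintype κ] {n : ℕ}
    {A : Matrix ι (Fin n) K} {b : ι → K} {D : Matrix κ (Fin n) K} {u l : κ → K}
    (hl : ∀ x, D *ᵥ x ≤ u → ∀ q, l q ≤ (D *ᵥ x) q) {s : Fin n → K} (hs : D *ᵥ s ≤ u)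
    (hA : ∀ i, ¬ BddBelow ((A i ⬝ᵥ ·) '' {x | fromRows A D *ᵥ x ≤ Sum.elim b u})) :
    ∃ y, (∀ i, (A *ᵥ y) i < 0) ∧ D *ᵥ y = 0 := by
  choose Y hY hYi using fun i => exists_mulVec_nonpos_dotProduct_neg_of_not_bddBelow (hA i)
  refine ⟨∑ i, Y i, fun i => ?_, ?_⟩
  · rw [mulVec_sum, Finset.sum_apply]
    exact sum_neg' (fun k _ => hY k (.inl i)) ⟨i, mem_univ i, hYi i⟩
  · rw [mulVec_sum]
    exact sum_eq_zero fun i _ =>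
      mulVec_eq_zero_of_mulVec_nonpos_of_bddBelow hl hs fun q => hY i (.inr q)

lemma eventually_add_nat_mul_le [Archimedean K] {a : K} (ha : a < 0) (c d : K) :
    ∀ᶠ t : ℕ in atTop, c + t * a ≤ d :=
  (tendsto_atBot_add_const_left _ c
    (tendsto_natCast_atTop_atTop.atTop_mul_const_of_neg ha)).eventually_le_atBot d

lemma Rat.exists_pos_nat_smul_eq_intCast {ι : Type*} [Fintype ι] (y : ι → ℚ) :
    ∃ N : ℕ, 0 < N ∧ ∃ z : ι → ℤ, (N : ℚ) • y = fun j => (z j : ℚ) := by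
  refine ⟨∏ j, (y j).den, prod_pos fun j _ => (y j).den_pos, ?_⟩
  choose k hk using fun j => dvd_prod_of_mem (fun j => (y j).den) (mem_univ j)
  refine ⟨fun j => k j * (y j).num, funext fun j => ?_⟩
  rw [Pi.smul_apply, smul_eq_mul, hk j, Nat.cast_mul, mul_comm ((y j).den : ℚ), mul_assoc,
    Rat.den_mul_eq_num]
  push_cast
  rfl

lemma not_bddBelow_of_not_bounded {ι : Type} [Fintype ι] {n : ℕ} {M : Matrix ι (Fin n) ℚ}
    {d : ι → ℚ} {r : ι} (h : ¬ Bounded M d (M r)) :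
    ¬ BddBelow ((M r ⬝ᵥ ·) '' {x | M *ᵥ x ≤ d}) := by
  rintro ⟨l, hl⟩
  refine h ⟨l, d r, fun x hx => hx r, fun x hx => ?_⟩
  rw [neg_dotProduct, neg_le_neg_iff]
  exact hl ⟨x, hx, rfl⟩

/-- Double-Bounded Reduction: a split system `(A x ≤ b) ∪ (l ≤ D x ≤ u)` over
`n = n₁ + n₂` variables (the last `n₂` being integer) has a mixed solution
iff its bounded part `D x ≤ u` alone has a mixed solution. -/
theorem double_bounded_reduction {m₁ m₂ n₁ n₂ : ℕ}
    (A : Matrix (Fin m₁) (Fin (n₁ + n₂)) ℚ) (b : Fin m₁ → ℚ)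
    (D : Matrix (Fin m₂) (Fin (n₁ + n₂)) ℚ) (u : Fin m₂ → ℚ)
    (hsplit : SplitSystem A b D u) :
    (∃ s : Fin (n₁ + n₂) → ℚ, A.mulVec s ≤ b ∧ D.mulVec s ≤ u ∧
        ∀ j : Fin (n₁ + n₂), n₁ ≤ (j : ℕ) → ∃ z : ℤ, s j = (z : ℚ)) ↔
    (∃ s : Fin (n₁ + n₂) → ℚ, D.mulVec s ≤ u ∧
        ∀ j : Fin (n₁ + n₂), n₁ ≤ (j : ℕ) → ∃ z : ℤ, s j = (z : ℚ)) := by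
  refine ⟨fun ⟨s, _, hDs, hs⟩ => ⟨s, hDs, hs⟩, fun ⟨s, hDs, hs⟩ => ?_⟩
  obtain ⟨-, -, ⟨l, hl⟩, -, hunb⟩ := hsplit
  obtain ⟨y, hAy, hDy⟩ := exists_recession_forall_mulVec_neg (b := b) hl hDs fun i =>
    not_bddBelow_of_not_bounded (M := fromRows A D) (r := .inl i) (hunb i)
  obtain ⟨N, hN, z, hz⟩ := Rat.exists_pos_nat_smul_eq_intCast y
  have hANy (i) : (A *ᵥ (N : ℚ) • y) i < 0 := by
    rw [mulVec_smul, Pi.smul_apply, smul_eq_mul]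
    exact mul_neg_of_pos_of_neg (by exact_mod_cast hN) (hAy i)
  obtain ⟨t, ht⟩ := (eventually_all.2 fun i =>
    eventually_add_nat_mul_le (hANy i) ((A *ᵥ s) i) (b i)).exists
  refine ⟨s + (t : ℚ) • (N : ℚ) • y, fun i => ?_, ?_, fun j hj => ?_⟩
  · rw [mulVec_add, mulVec_smul]
    exact ht i
  · rwa [mulVec_add, mulVec_smul, mulVec_smul, hDy, smul_zero, smul_zero, add_zero]
  · obtain ⟨zs, hzs⟩ := hs j hj
    refine ⟨zs + t * z j, ?_⟩
    rw [hz, Pi.add_apply, Pi.smul_apply, hzs, smul_eq_mul]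
    push_cast
    rfl
end
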